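/- Let K be a degree-3 number field, and let ω₁, ω₂ ∈ O_K be nonzero and linearly independent over ℚ. Let 𝔭 be a prime ideal of O_K lying above a rational prime p, unramified over p, with N(𝔭) = p, and assume p ∤ N_{K/ℚ}(ω₁ω₂); let k ≥ 1. For integers g₁, g₂ define S⁽¹⁾(g₁,g₂;𝔭^k) := Σ over integers 1 ≤ n₁, n₂ ≤ p^k with gcd(n₁, n₂, p) = 1 and 𝔭^k dividing the principal ideal (n₁ω₁ + n₂ω₂)O_K, of e((g₁n₁ + g₂n₂)/p^k). Then: (a) if gcd(g₁, g₂, p) = 1, S⁽¹⁾(g₁,g₂;𝔭^k) equals (p−1)p^{k−1} if 𝔭^k divides the principal ideal (g₂ω₁ − g₁ω₂)O_K; equals −p^{k−1} if 𝔭^{k−1} divides (g₂ω₁ − g₁ω₂)O_K but 𝔭^k does not; and equals 0 otherwise. (b) If gcd(g₁, g₂, p^k) = p^{k₀} with 0 ≤ k₀ < k, then S⁽¹⁾(g₁,g₂;𝔭^k) = p^{k₀} · S⁽¹⁾(g₁/p^{k₀}, g₂/p^{k₀}; 𝔭^{k−k₀}). -/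

import Mathlib

open scoped BigOperators
open NumberField

noncomputable section

/-- `e(t) = exp(2πit)`. -/
def eC (t : ℝ) : ℂ := Complex.exp (2 * Real.pi * Complex.I * t)

/-- The exponential sum `S⁽¹⁾(g₁, g₂; 𝔭^k)`: the sum of `e((g₁n₁ + g₂n₂)/p^k)` over the pairs
`1 ≤ n₁, n₂ ≤ p^k` with `gcd(n₁, n₂, p) = 1` such that `𝔭^k` divides the principal ideal
generated by `n₁ω₁ + n₂ω₂`. -/
def expSumS1 {K : Type} [Field K] [NumberField K] (ω₁ ω₂ : 𝓞 K)
    (g₁ g₂ : ℤ) (p k : ℕ) (𝔭 : Ideal (𝓞 K)) : ℂ :=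
  ∑ᶠ (n : ℤ × ℤ) (_ : 1 ≤ n.1 ∧ n.1 ≤ (p : ℤ) ^ k ∧ 1 ≤ n.2 ∧ n.2 ≤ (p : ℤ) ^ k ∧
      Nat.gcd (Int.gcd n.1 n.2) p = 1 ∧ n.1 • ω₁ + n.2 • ω₂ ∈ 𝔭 ^ k),
    eC (((g₁ * n.1 + g₂ * n.2 : ℤ) : ℝ) / (p : ℝ) ^ k)


/-!
Since `𝔭` has degree one and is unramified over `p`, an integer lies in `𝔭 ^ j` exactly when
`p ^ j` divides it, so `ℤ → 𝓞 K ⧸ 𝔭 ^ k` is onto; as `ω₁` is a unit modulo `𝔭`, some integer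
`C` is congruent to `ω₂ / ω₁` modulo `𝔭 ^ k`, and then `n₁ ω₁ + n₂ ω₂ ∈ 𝔭 ^ j` iff
`p ^ j ∣ n₁ + C n₂` for `j ≤ k`. Under that congruence `gcd(n₁, n₂, p) = 1` just says `p ∤ n₂`,
and each such `n₂` has exactly one partner `n₁ ∈ [1, p ^ j]`. Hence `S⁽¹⁾(g₁, g₂; 𝔭 ^ j)` is the
Ramanujan sum `c_{p ^ j}(g₂ - g₁ C)`, which equals
`p ^ j [p ^ j ∣ m] - p ^ (j - 1) [p ^ (j - 1) ∣ m]` at `m = g₂ - g₁ C`; and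
`g₂ ω₁ - g₁ ω₂ ∈ 𝔭 ^ j` iff `p ^ j ∣ g₂ - g₁ C`.
-/

open Finset

lemma eC_add (a b : ℝ) : eC (a + b) = eC a * eC b := by
  rw [eC, eC, eC, ← Complex.exp_add]
  push_cast
  ring_nf

lemma eC_intCast (m : ℤ) : eC m = 1 := by
  rw [eC, ← Complex.exp_int_mul_two_pi_mul_I m]
  push_cast
  ring_nf

lemma eC_add_intCast (t : ℝ) (m : ℤ) : eC (t + m) = eC t := by
  rw [eC_add, eC_intCast, mul_one]

lemma eC_natCast_mul (n : ℕ) (t : ℝ) : eC (n * t) = eC t ^ n := by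
  rw [eC, eC, ← Complex.exp_nat_mul]
  push_cast
  ring_nf

lemma eC_eq_one_iff {t : ℝ} : eC t = 1 ↔ ∃ n : ℤ, t = n := by
  have h2πi : 2 * (Real.pi : ℂ) * Complex.I ≠ 0 := by simp [Real.pi_ne_zero]
  rw [eC, Complex.exp_eq_one_iff]
  refine exists_congr fun n => ⟨fun h => ?_, fun h => by rw [h]; push_cast; ring⟩
  exact_mod_cast mul_left_cancel₀ h2πi (h.trans (mul_comm _ _))

lemma eC_intCast_div_eq_of_dvd_sub {a b q : ℤ} (h : q ∣ a - b) :
    eC (a / q) = eC (b / q) := by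
  obtain ⟨t, ht⟩ := h
  rcases eq_or_ne q 0 with rfl | hq
  · simp
  have : (a : ℝ) / q = b / q + t := by
    have ha : a = b + q * t := by linarith
    rw [ha]
    push_cast
    field_simp
  rw [this, eC_add_intCast]

lemma sum_Icc_eC_mul_div {q : ℕ} (hq : 0 < q) (m : ℤ) :
    ∑ n ∈ Icc (1 : ℤ) q, eC ((m * n : ℤ) / q) = if (q : ℤ) ∣ m then (q : ℂ) else 0 := by
  set z := eC (m / q) with hz_def
  have hterm : ∀ i : ℕ, eC ((m * (1 + i : ℤ) : ℤ) / q) = z * z ^ i := by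
    intro i
    rw [← eC_natCast_mul, ← eC_add]
    push_cast
    ring_nf
  rw [Int.Icc_eq_finset_map, sum_map]
  simp only [Function.Embedding.trans_apply, Nat.castEmbedding_apply, addLeftEmbedding_apply,
    hterm, ← mul_sum, add_sub_cancel_right, Int.toNat_natCast]
  split_ifs with hdvd
  · obtain ⟨c, rfl⟩ := hdvd
    have hz : z = 1 := by
      rw [hz_def, ← eC_intCast c]
      congr 1
      push_cast
      field_simp
    simp [hz]
  · have hz : z ≠ 1 := fun h => by
      obtain ⟨n, hn⟩ := eC_eq_one_iff.mp h
      exact hdvd ⟨n, by exact_mod_cast (div_eq_iff (by positivity)).mp hn |>.trans (mul_comm _ _)⟩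
    have hzq : z ^ q = 1 := by
      rw [← eC_natCast_mul, mul_div_cancel₀ _ (by positivity), eC_intCast]
    rw [geom_sum_eq hz, hzq, sub_self, zero_div, mul_zero]

lemma sum_filter_dvd_Icc {M : Type*} [AddCommMonoid M] {d : ℤ} (hd : 0 < d) (Q : ℤ)
    (f : ℤ → M) :
    ∑ n ∈ (Icc 1 (d * Q)).filter (d ∣ ·), f n = ∑ t ∈ Icc 1 Q, f (d * t) := by
  refine (sum_nbij' (d * ·) (· / d) (fun t ht => ?_) (fun n hn => ?_) (fun t _ => ?_)
    (fun n hn => ?_) (fun _ _ => rfl)).symm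
  · simp only [mem_Icc, mem_filter] at ht ⊢
    exact ⟨⟨by nlinarith, by nlinarith⟩, dvd_mul_right d t⟩
  · simp only [mem_Icc, mem_filter] at hn ⊢
    obtain ⟨⟨h1, h2⟩, t, rfl⟩ := hn
    rw [Int.mul_ediv_cancel_left _ hd.ne']
    exact ⟨by nlinarith, le_of_mul_le_mul_left h2 hd⟩
  · exact Int.mul_ediv_cancel_left _ hd.ne'
  · obtain ⟨t, rfl⟩ := (mem_filter.mp hn).2
    simp only [Int.mul_ediv_cancel_left _ hd.ne']

/-- The Ramanujan sum `c_{p^j}(m)`. -/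
def ramanujanSum (p j : ℕ) (m : ℤ) : ℂ :=
  ∑ n ∈ (Icc (1 : ℤ) ((p : ℤ) ^ j)).filter (¬ (p : ℤ) ∣ ·), eC ((m * n : ℤ) / (p : ℝ) ^ j)

lemma ramanujanSum_succ {p : ℕ} (hp : 0 < p) (j : ℕ) (m : ℤ) :
    ramanujanSum p (j + 1) m = (if (p : ℤ) ^ (j + 1) ∣ m then (p : ℂ) ^ (j + 1) else 0)
      - (if (p : ℤ) ^ j ∣ m then (p : ℂ) ^ j else 0) := by
  have hp' : (0 : ℤ) < p := by exact_mod_cast hp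
  have hcomplete := sum_Icc_eC_mul_div (pow_pos hp (j + 1)) m
  have hcoarse := sum_Icc_eC_mul_div (pow_pos hp j) m
  simp only [Nat.cast_pow] at hcomplete hcoarse
  have hmultiples := sum_filter_dvd_Icc hp' ((p : ℤ) ^ j)
    (fun n => eC ((m * n : ℤ) / (p : ℝ) ^ (j + 1)))
  have hterm : ∀ t : ℤ, eC ((m * (p * t) : ℤ) / (p : ℝ) ^ (j + 1))
      = eC ((m * t : ℤ) / (p : ℝ) ^ j) := by
    intro t
    congr 1
    push_cast
    field_simp
    ring
  simp only [← pow_succ', hterm, hcoarse] at hmultiples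
  rw [← sum_filter_add_sum_filter_not _ (fun n : ℤ => (p : ℤ) ∣ n), hmultiples] at hcomplete
  rw [ramanujanSum, ← hcomplete, add_sub_cancel_left]

section RamanujanSum

variable {p j : ℕ} {m : ℤ}

lemma ramanujanSum_of_dvd (hp : 0 < p) (hj : 1 ≤ j) (h : (p : ℤ) ^ j ∣ m) :
    ramanujanSum p j m = ((p : ℂ) - 1) * (p : ℂ) ^ (j - 1) := by
  obtain ⟨i, rfl⟩ := Nat.exists_eq_add_of_le' hj
  rw [ramanujanSum_succ hp, if_pos h, if_pos ((pow_dvd_pow _ i.le_succ).trans h),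
    Nat.add_sub_cancel]
  ring

lemma ramanujanSum_of_dvd_of_not_dvd (hp : 0 < p) (hj : 1 ≤ j) (h : (p : ℤ) ^ (j - 1) ∣ m)
    (h' : ¬ (p : ℤ) ^ j ∣ m) : ramanujanSum p j m = -(p : ℂ) ^ (j - 1) := by
  obtain ⟨i, rfl⟩ := Nat.exists_eq_add_of_le' hj
  rw [Nat.add_sub_cancel] at h ⊢
  rw [ramanujanSum_succ hp, if_neg h', if_pos h, zero_sub]

lemma ramanujanSum_of_not_dvd (hp : 0 < p) (hj : 1 ≤ j) (h : ¬ (p : ℤ) ^ (j - 1) ∣ m) :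
    ramanujanSum p j m = 0 := by
  obtain ⟨i, rfl⟩ := Nat.exists_eq_add_of_le' hj
  rw [Nat.add_sub_cancel] at h
  rw [ramanujanSum_succ hp, if_neg h, if_neg fun h' => h ((pow_dvd_pow _ i.le_succ).trans h'),
    sub_zero]

lemma ramanujanSum_pow_mul (hp : 0 < p) (k₀ : ℕ) (hj : 1 ≤ j) :
    ramanujanSum p (k₀ + j) ((p : ℤ) ^ k₀ * m) = (p : ℂ) ^ k₀ * ramanujanSum p j m := by
  obtain ⟨i, rfl⟩ := Nat.exists_eq_add_of_le' hj
  have hpk₀ : (p : ℤ) ^ k₀ ≠ 0 := pow_ne_zero _ (by exact_mod_cast hp.ne')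
  rw [← add_assoc, ramanujanSum_succ hp, ramanujanSum_succ hp]
  simp only [add_assoc k₀, pow_add (p : ℤ) k₀, mul_dvd_mul_iff_left hpk₀]
  split_ifs <;> ring

end RamanujanSum

lemma gcd_gcd_eq_one_iff {p : ℕ} (hp : p.Prime) (a b : ℤ) :
    Nat.gcd (Int.gcd a b) p = 1 ↔ ¬ ((p : ℤ) ∣ a ∧ (p : ℤ) ∣ b) := by
  rw [← Nat.Coprime, Nat.coprime_comm, hp.coprime_iff_not_dvd, ← Int.natCast_dvd_natCast,
    Int.dvd_coe_gcd_iff]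

lemma sum_pairs_eq_ramanujanSum {p j : ℕ} (hp : p.Prime) (hj : 1 ≤ j) (C g₁ g₂ : ℤ) :
    ∑ n ∈ (Icc 1 ((p : ℤ) ^ j) ×ˢ Icc 1 ((p : ℤ) ^ j)).filter
        (fun n => Nat.gcd (Int.gcd n.1 n.2) p = 1 ∧ (p : ℤ) ^ j ∣ n.1 + C * n.2),
      eC ((g₁ * n.1 + g₂ * n.2 : ℤ) / (p : ℝ) ^ j) = ramanujanSum p j (g₂ - g₁ * C) := by
  set q : ℤ := (p : ℤ) ^ j with hq_def
  have hq : 0 < q := pow_pos (by exact_mod_cast hp.pos) j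
  have hpq : (p : ℤ) ∣ q := dvd_pow_self _ (by omega)
  -- the unique `n₁ ∈ [1, q]` with `q ∣ n₁ + C * n₂`
  let partner : ℤ → ℤ := fun n₂ => q - C * n₂ % q
  have partner_mem : ∀ n₂, partner n₂ ∈ Icc 1 q := fun n₂ => by
    have := Int.emod_nonneg (C * n₂) hq.ne'
    have := Int.emod_lt_of_pos (C * n₂) hq
    simp only [mem_Icc, partner]
    omega
  have partner_dvd : ∀ n₂, q ∣ partner n₂ + C * n₂ := fun n₂ =>
    ⟨1 + C * n₂ / q, by simp only [partner]; rw [Int.emod_def]; ring⟩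
  have partner_unique : ∀ n₁ n₂, n₁ ∈ Icc 1 q → q ∣ n₁ + C * n₂ → partner n₂ = n₁ := by
    intro n₁ n₂ hn₁ hdvd
    rw [mem_Icc] at hn₁
    have hmod : C * n₂ ≡ q - n₁ [ZMOD q] :=
      Int.modEq_iff_dvd.mpr (by simpa [sub_sub] using dvd_sub_self_left.mpr hdvd)
    rw [Int.ModEq, Int.emod_eq_of_lt (a := q - n₁) (by omega) (by omega)] at hmod
    simp only [partner]
    omega
  have hsummand : ∀ n : ℤ × ℤ, q ∣ n.1 + C * n.2 →
      eC ((g₁ * n.1 + g₂ * n.2 : ℤ) / (p : ℝ) ^ j)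
        = eC (((g₂ - g₁ * C) * n.2 : ℤ) / (p : ℝ) ^ j) := by
    intro n hn
    have hdiff : g₁ * n.1 + g₂ * n.2 - (g₂ - g₁ * C) * n.2 = g₁ * (n.1 + C * n.2) := by ring
    have hden : (p : ℝ) ^ j = (q : ℝ) := by push_cast [hq_def]; rfl
    rw [hden]
    exact eC_intCast_div_eq_of_dvd_sub (hdiff ▸ hn.mul_left g₁)
  refine sum_nbij' Prod.snd (fun n₂ => (partner n₂, n₂)) (fun n hn => ?_) (fun n₂ hn₂ => ?_)
    (fun n hn => ?_) (fun _ _ => rfl) (fun n hn => hsummand n (mem_filter.mp hn).2.2)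
  · simp only [mem_filter, mem_product, gcd_gcd_eq_one_iff hp] at hn ⊢
    exact ⟨hn.1.2, fun hp₂ =>
      hn.2.1 ⟨(dvd_add_left (hp₂.mul_left C)).mp (hpq.trans hn.2.2), hp₂⟩⟩
  · simp only [mem_filter, mem_product, gcd_gcd_eq_one_iff hp] at hn₂ ⊢
    exact ⟨⟨partner_mem n₂, hn₂.1⟩, fun h => hn₂.2 h.2, partner_dvd n₂⟩
  · simp only [mem_filter, mem_product] at hn
    exact Prod.ext (partner_unique n.1 n.2 hn.1.1 hn.2.2) rfl

lemma Ideal.intCast_mem_iff_dvd {R : Type*} [CommRing R] {P : Ideal R} [P.IsPrime] {p : ℕ}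
    (hp : p.Prime) (hpP : (p : R) ∈ P) (m : ℤ) : (m : R) ∈ P ↔ (p : ℤ) ∣ m := by
  have hmax : (Ideal.span {(p : ℤ)}).IsMaximal :=
    PrincipalIdealRing.isMaximal_of_irreducible (Nat.prime_iff_prime_int.mp hp).irreducible
  have hcomap : P.comap (Int.castRingHom R) = Ideal.span {(p : ℤ)} :=
    (hmax.eq_of_le (Ideal.comap_ne_top _ (Ideal.IsPrime.ne_top ‹_›))
      ((Ideal.span_singleton_le_iff_mem _).mpr (by simpa using hpP))).symm
  rw [← Ideal.mem_span_singleton, ← hcomap, Ideal.mem_comap, eq_intCast]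

lemma Ideal.ne_bot_of_mem_of_notMem_sq {R : Type*} [CommRing R] {P : Ideal R} {a : R}
    (ha : a ∈ P) (ha₂ : a ∉ P ^ 2) : P ≠ ⊥ := by
  rintro rfl
  exact ha₂ (by simpa using ha)

lemma Ideal.exists_mul_sub_one_mem_pow {R : Type*} [CommRing R] {P : Ideal R} [P.IsMaximal]
    {x : R} (hx : x ∉ P) (k : ℕ) : ∃ y, x * y - 1 ∈ P ^ k := by
  obtain ⟨y, i, hi, hyi⟩ := Ideal.IsMaximal.exists_inv ‹_› hx
  have hsup : Ideal.span {x} ⊔ P = ⊤ :=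
    (Ideal.eq_top_iff_one _).mpr (Ideal.mem_span_singleton_sup.mpr ⟨y, i, hi, hyi⟩)
  obtain ⟨z, b, hb, hzb⟩ := Ideal.mem_span_singleton_sup.mp
    ((Ideal.eq_top_iff_one _).mp (Ideal.sup_pow_eq_top (n := k) hsup))
  exact ⟨z, by rw [← hzb, mul_comm x z, sub_add_cancel_left]; exact neg_mem hb⟩

section DedekindDomain

variable {R : Type*} [CommRing R] [IsDedekindDomain R] {P : Ideal R} [hP : P.IsPrime] {p : ℕ}

lemma Ideal.mem_pow_of_mul_mem_pow_succ {a x : R} (ha : a ∈ P) (ha₂ : a ∉ P ^ 2) {j : ℕ}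
    (h : a * x ∈ P ^ (j + 1)) : x ∈ P ^ j := by
  have hP₀ := Ideal.ne_bot_of_mem_of_notMem_sq ha ha₂
  obtain ⟨J, hJ⟩ : P ∣ Ideal.span {a} :=
    Ideal.dvd_iff_le.mpr ((Ideal.span_singleton_le_iff_mem _).mpr ha)
  have hPJ : ¬ P ∣ J := by
    rintro ⟨J', rfl⟩
    refine ha₂ ((Ideal.span_singleton_le_iff_mem (P ^ 2)).mp ?_)
    rw [hJ, ← mul_assoc, ← sq]
    exact Ideal.mul_le_left
  simp only [← Ideal.span_singleton_le_iff_mem, ← Ideal.dvd_iff_le,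
    ← Ideal.span_singleton_mul_span_singleton, hJ, pow_succ', mul_assoc] at h ⊢
  exact (Ideal.prime_of_isPrime hP₀ hP).pow_dvd_of_dvd_mul_left j hPJ
    ((mul_dvd_mul_iff_left hP₀).mp h)

lemma Ideal.intCast_mem_pow_iff (hp : p.Prime) (hpP : (p : R) ∈ P)
    (hp₂ : (p : R) ∉ P ^ 2) (j : ℕ) (m : ℤ) : (m : R) ∈ P ^ j ↔ (p : ℤ) ^ j ∣ m := by
  induction j generalizing m with
  | zero => simp
  | succ j ih =>
    refine ⟨fun h => ?_, fun ⟨t, ht⟩ => ?_⟩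
    · obtain ⟨m', rfl⟩ :=
        (Ideal.intCast_mem_iff_dvd hp hpP m).mp (Ideal.pow_le_self j.succ_ne_zero h)
      push_cast at h
      rw [pow_succ']
      exact mul_dvd_mul_left _ ((ih m').mp (Ideal.mem_pow_of_mul_mem_pow_succ hpP hp₂ h))
    · rw [ht]
      push_cast
      exact Ideal.mul_mem_right _ _ (Ideal.pow_mem_pow hpP _)


lemma Ideal.exists_intCast_sub_mem_pow (hp : p.Prime) (hpP : (p : R) ∈ P)
    (hp₂ : (p : R) ∉ P ^ 2) {k : ℕ} (hcard : Nat.card (R ⧸ P ^ k) = p ^ k) (x : R) :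
    ∃ C : ℤ, x - C ∈ P ^ k := by
  have : CharP (R ⧸ P ^ k) (p ^ k) := ⟨fun n => by
    rw [← map_natCast (Ideal.Quotient.mk _), Ideal.Quotient.eq_zero_iff_mem, ← Int.cast_natCast,
      Ideal.intCast_mem_pow_iff hp hpP hp₂, ← Int.natCast_pow, Int.natCast_dvd_natCast]⟩
  have : Fintype (R ⧸ P ^ k) :=
    have := Nat.finite_of_card_ne_zero (hcard ▸ pow_ne_zero k hp.ne_zero); Fintype.ofFinite _
  obtain ⟨a, ha⟩ := (ZMod.castHom_bijective (R ⧸ P ^ k)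
    (by rw [← Nat.card_eq_fintype_card, hcard])).2 (Ideal.Quotient.mk _ x)
  obtain ⟨C, rfl⟩ := ZMod.intCast_surjective a
  refine ⟨C, Ideal.Quotient.eq.mp ?_⟩
  rw [← ha, map_intCast, map_intCast]

lemma Ideal.exists_int_forall_smul_add_smul_mem_pow_iff (hp : p.Prime) (hpP : (p : R) ∈ P)
    (hp₂ : (p : R) ∉ P ^ 2) {k : ℕ} (hcard : Nat.card (R ⧸ P ^ k) = p ^ k) {ω₁ : R}
    (hω₁ : ω₁ ∉ P) (ω₂ : R) :
    ∃ C : ℤ, ∀ j ≤ k, ∀ n₁ n₂ : ℤ, n₁ • ω₁ + n₂ • ω₂ ∈ P ^ j ↔ (p : ℤ) ^ j ∣ n₁ + C * n₂ := by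
  have := hP.isMaximal (Ideal.ne_bot_of_mem_of_notMem_sq hpP hp₂)
  obtain ⟨y, hy⟩ := Ideal.exists_mul_sub_one_mem_pow hω₁ k
  obtain ⟨C, hC⟩ := Ideal.exists_intCast_sub_mem_pow hp hpP hp₂ hcard (ω₂ * y)
  -- `C ≡ ω₂ / ω₁ (mod P ^ k)`
  have hCω : ω₂ - C * ω₁ ∈ P ^ k := by
    have : ω₂ - C * ω₁ = ω₁ * (ω₂ * y - C) - ω₂ * (ω₁ * y - 1) := by ring
    rw [this]
    exact sub_mem (Ideal.mul_mem_left _ _ hC) (Ideal.mul_mem_left _ _ hy)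
  refine ⟨C, fun j hj n₁ n₂ => ?_⟩
  have hdecomp : n₁ • ω₁ + n₂ • ω₂ = (n₁ + C * n₂ : ℤ) * ω₁ + n₂ * (ω₂ - C * ω₁) := by
    simp only [zsmul_eq_mul]
    push_cast
    ring
  rw [hdecomp, Submodule.add_mem_iff_left _
      (Ideal.mul_mem_left _ _ (Ideal.pow_le_pow_right hj hCω)),
    ← Ideal.intCast_mem_pow_iff hp hpP hp₂]
  exact ⟨fun h => (Ideal.IsPrime.mem_pow_mul _ h).resolve_right hω₁,
    fun h => Ideal.mul_mem_right _ _ h⟩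

end DedekindDomain

lemma NumberField.notMem_of_not_dvd_norm {K : Type*} [Field K] [NumberField K]
    {P : Ideal (𝓞 K)} {p : ℕ} (hnorm : Ideal.absNorm P = p) {x : 𝓞 K}
    (hx : ¬ (p : ℤ) ∣ Algebra.norm ℤ x) : x ∉ P := fun hxP => hx <| by
  have h := Ideal.absNorm_dvd_absNorm_of_le ((Ideal.span_singleton_le_iff_mem P).mpr hxP)
  rw [hnorm, Ideal.absNorm_span_singleton] at h
  exact Int.natCast_dvd.mpr h

lemma expSumS1_eq_ramanujanSum {K : Type} [Field K] [NumberField K] {ω₁ ω₂ : 𝓞 K}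
    {𝔭 : Ideal (𝓞 K)} {p j : ℕ} (hp : p.Prime) (hj : 1 ≤ j) {C : ℤ}
    (hC : ∀ n₁ n₂ : ℤ, n₁ • ω₁ + n₂ • ω₂ ∈ 𝔭 ^ j ↔ (p : ℤ) ^ j ∣ n₁ + C * n₂) (g₁ g₂ : ℤ) :
    expSumS1 ω₁ ω₂ g₁ g₂ p j 𝔭 = ramanujanSum p j (g₂ - g₁ * C) := by
  rw [expSumS1, ← sum_pairs_eq_ramanujanSum hp hj C g₁ g₂]
  refine finsum_cond_eq_sum_of_cond_iff _ fun _ => ?_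
  simp only [mem_filter, mem_product, mem_Icc, hC, and_assoc]

theorem statement8_general
    (K : Type) [Field K] [NumberField K]
    (ω₁ ω₂ : 𝓞 K)
    (p : ℕ) (hp : p.Prime) (𝔭 : Ideal (𝓞 K)) (hprime : 𝔭.IsPrime)
    (hnorm : Ideal.absNorm 𝔭 = p) (hunram : (p : 𝓞 K) ∉ 𝔭 ^ 2)
    (hpω : ¬ ((p : ℤ) ∣ Algebra.norm ℤ (ω₁ * ω₂)))
    (k : ℕ) (hk : 1 ≤ k) (g₁ g₂ : ℤ) :
    (Nat.gcd (Int.gcd g₁ g₂) p = 1 →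
      ((g₂ • ω₁ - g₁ • ω₂ ∈ 𝔭 ^ k →
        expSumS1 ω₁ ω₂ g₁ g₂ p k 𝔭 = ((p : ℂ) - 1) * (p : ℂ) ^ (k - 1)) ∧
      (g₂ • ω₁ - g₁ • ω₂ ∈ 𝔭 ^ (k - 1) → g₂ • ω₁ - g₁ • ω₂ ∉ 𝔭 ^ k →
        expSumS1 ω₁ ω₂ g₁ g₂ p k 𝔭 = -((p : ℂ) ^ (k - 1))) ∧
      (g₂ • ω₁ - g₁ • ω₂ ∉ 𝔭 ^ (k - 1) →
        expSumS1 ω₁ ω₂ g₁ g₂ p k 𝔭 = 0))) ∧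
    (∀ k₀ : ℕ, k₀ < k → Nat.gcd (Int.gcd g₁ g₂) (p ^ k) = p ^ k₀ →
      ∀ g₁' g₂' : ℤ, g₁ = (p : ℤ) ^ k₀ * g₁' → g₂ = (p : ℤ) ^ k₀ * g₂' →
        expSumS1 ω₁ ω₂ g₁ g₂ p k 𝔭
          = (p : ℂ) ^ k₀ * expSumS1 ω₁ ω₂ g₁' g₂' p (k - k₀) 𝔭) := by
  have hpP : (p : 𝓞 K) ∈ 𝔭 := by simpa [hnorm] using Ideal.absNorm_mem 𝔭
  have hω₁ : ω₁ ∉ 𝔭 := NumberField.notMem_of_not_dvd_norm hnorm fun h =>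
    hpω (by rw [map_mul]; exact h.mul_right _)
  have hcard : Nat.card (𝓞 K ⧸ 𝔭 ^ k) = p ^ k := by
    rw [← Submodule.cardQuot_apply, ← Ideal.absNorm_apply, map_pow, hnorm]
  obtain ⟨C, hC⟩ := Ideal.exists_int_forall_smul_add_smul_mem_pow_iff hp hpP hunram hcard hω₁ ω₂
  have hS : ∀ j, 1 ≤ j → j ≤ k → ∀ a b : ℤ,
      expSumS1 ω₁ ω₂ a b p j 𝔭 = ramanujanSum p j (b - a * C) :=
    fun j hj hjk => expSumS1_eq_ramanujanSum hp hj (hC j hjk)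
  have hmem : ∀ j ≤ k, g₂ • ω₁ - g₁ • ω₂ ∈ 𝔭 ^ j ↔ (p : ℤ) ^ j ∣ g₂ - g₁ * C := fun j hj => by
    simpa [sub_eq_add_neg, mul_comm] using hC j hj g₂ (-g₁)
  rw [hS k hk le_rfl]
  refine ⟨fun _ => ⟨fun h => ramanujanSum_of_dvd hp.pos hk ((hmem k le_rfl).mp h),
    fun h h' => ramanujanSum_of_dvd_of_not_dvd hp.pos hk ((hmem _ (k.sub_le 1)).mp h)
      (mt (hmem k le_rfl).mpr h'),
    fun h => ramanujanSum_of_not_dvd hp.pos hk (mt (hmem _ (k.sub_le 1)).mpr h)⟩, ?_⟩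
  rintro k₀ hk₀ - g₁' g₂' rfl rfl
  obtain ⟨j, rfl⟩ := Nat.exists_eq_add_of_le hk₀.le
  have hj : 1 ≤ j := by omega
  rw [Nat.add_sub_cancel_left, hS j hj (Nat.le_add_left j k₀),
    show (p : ℤ) ^ k₀ * g₂' - (p : ℤ) ^ k₀ * g₁' * C = (p : ℤ) ^ k₀ * (g₂' - g₁' * C) by ring]
  exact ramanujanSum_pow_mul hp.pos k₀ hj

theorem statement8
    (K : Type) [Field K] [NumberField K] (hdeg : Module.finrank ℚ K = 3)
    (ω₁ ω₂ : 𝓞 K) (hω₁ : ω₁ ≠ 0) (hω₂ : ω₂ ≠ 0)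
    (hli : LinearIndependent ℚ ![((ω₁ : K)), ((ω₂ : K))])
    (p : ℕ) (hp : p.Prime) (𝔭 : Ideal (𝓞 K)) (hprime : 𝔭.IsPrime)
    (hnorm : Ideal.absNorm 𝔭 = p) (hunram : (p : 𝓞 K) ∉ 𝔭 ^ 2)
    (hpω : ¬ ((p : ℤ) ∣ Algebra.norm ℤ (ω₁ * ω₂)))
    (k : ℕ) (hk : 1 ≤ k) (g₁ g₂ : ℤ) :
    (Nat.gcd (Int.gcd g₁ g₂) p = 1 →
      ((g₂ • ω₁ - g₁ • ω₂ ∈ 𝔭 ^ k →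
        expSumS1 ω₁ ω₂ g₁ g₂ p k 𝔭 = ((p : ℂ) - 1) * (p : ℂ) ^ (k - 1)) ∧
      (g₂ • ω₁ - g₁ • ω₂ ∈ 𝔭 ^ (k - 1) → g₂ • ω₁ - g₁ • ω₂ ∉ 𝔭 ^ k →
        expSumS1 ω₁ ω₂ g₁ g₂ p k 𝔭 = -((p : ℂ) ^ (k - 1))) ∧
      (g₂ • ω₁ - g₁ • ω₂ ∉ 𝔭 ^ (k - 1) →
        expSumS1 ω₁ ω₂ g₁ g₂ p k 𝔭 = 0))) ∧
    (∀ k₀ : ℕ, k₀ < k → Nat.gcd (Int.gcd g₁ g₂) (p ^ k) = p ^ k₀ →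
      ∀ g₁' g₂' : ℤ, g₁ = (p : ℤ) ^ k₀ * g₁' → g₂ = (p : ℤ) ^ k₀ * g₂' →
        expSumS1 ω₁ ω₂ g₁ g₂ p k 𝔭
          = (p : ℂ) ^ k₀ * expSumS1 ω₁ ω₂ g₁' g₂' p (k - k₀) 𝔭) :=
  statement8_general K ω₁ ω₂ p hp 𝔭 hprime hnorm hunram hpω k hk g₁ g₂
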